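/- arXiv:0712.3327 — 5 statements merged into one kernel-verified Lean document; each statement's English description precedes it below -/
import Mathlib

section
/- The region R_BZT(p,q) defined for parameters p,q ∈ [0,1] by R₀ ≤ min{p/6 + q/2, p} and R₁ ≤ (1−p)/2 + (1−q) contains the point (R₀, R₁) = (1/2, 5/12), and for every p, q ∈ [0,1], if R₀ = 1/2 is feasible then R₁ ≤ 5/12; i.e., (1/2, 5/12) is on the boundary. -/
/-- The BZT rate region of the erasure example: union over `p, q ∈ [0,1]` of the
rectangles `{(R₀,R₁) ∈ ℝ≥0² : R₀ ≤ min (p/6 + q/2) p, R₁ ≤ (1-p)/2 + (1-q)}`. -/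
def BZTregion : Set (ℝ × ℝ) :=
  {R | ∃ p q : ℝ, p ∈ Set.Icc (0:ℝ) 1 ∧ q ∈ Set.Icc (0:ℝ) 1 ∧
    0 ≤ R.1 ∧ 0 ≤ R.2 ∧ R.1 ≤ min (p/6 + q/2) p ∧ R.2 ≤ (1-p)/2 + (1-q)}

/-- `(1/2, 5/12)` lies in the BZT region, and whenever `R₀ = 1/2` is feasible for
parameters `(p,q)`, the corresponding bound on `R₁` is at most `5/12`; i.e.
`(1/2, 5/12)` is on the boundary. -/
theorem bzt_boundary_point :
    ((1/2 : ℝ), (5/12 : ℝ)) ∈ BZTregion ∧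
    ∀ p q : ℝ, p ∈ Set.Icc (0:ℝ) 1 → q ∈ Set.Icc (0:ℝ) 1 →
      (1/2 : ℝ) ≤ min (p/6 + q/2) p → (1-p)/2 + (1-q) ≤ 5/12 := by
  -- `(p, q) = (1/2, 5/6)` makes both constraints on `R₀` tight.
  refine ⟨⟨1/2, 5/6, by norm_num⟩, fun p q _ _ h => ?_⟩
  obtain ⟨hq, hp⟩ := le_min_iff.mp h
  -- `q ≥ 1 - p/3` and `p ≥ 1/2` give `p/2 + q ≥ 1 + p/6 ≥ 13/12`.
  linarith
end

section
/- The region C(r,s,t) defined for parameters 0 ≤ r ≤ t ≤ 1 and 0 ≤ s ≤ 1 by R₀ ≤ min{r/6 + s/2, t} and R₀ + R₁ ≤ min{r/6 + s/2 + (1−r)/2 + (1−s), t + (1−t)/2 + (1−s)} contains the point (R₀, R₁) = (1/2, 1/2) (achieved at r = 0, s = 1, t = 1), which lies strictly outside the region ∪_{p,q∈[0,1]} {(R₀,R₁) : R₀ ≤ min(p/6 + q/2, p), R₁ ≤ (1−p)/2 + 1−q}. -/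
/-- The capacity region of the erasure example: union over `0 ≤ r ≤ t ≤ 1`,
`0 ≤ s ≤ 1` of the sets `C(r,s,t)`. -/
def CapRegion : Set (ℝ × ℝ) :=
  {R | ∃ r s t : ℝ, 0 ≤ r ∧ r ≤ t ∧ t ≤ 1 ∧ 0 ≤ s ∧ s ≤ 1 ∧
    0 ≤ R.1 ∧ 0 ≤ R.2 ∧ R.1 ≤ min (r/6 + s/2) t ∧
    R.1 + R.2 ≤ min (r/6 + s/2 + (1-r)/2 + (1-s)) (t + (1-t)/2 + (1-s))}

/-- Six times `2 R₀ ≤ p/3 + q` plus `R₁ ≤ (1-p)/2 + (1-q)` gives `12 R₀ + 6 R₁ ≤ 9 - p`,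
and `R₀ ≤ p` then eliminates `p`. -/
theorem BZTregion_subset_halfPlane :
    BZTregion ⊆ {R : ℝ × ℝ | 13 * R.1 + 6 * R.2 ≤ 9} := by
  rintro R ⟨p, q, -, -, -, -, hR₀, hR₁⟩
  obtain ⟨hR₀pq, hR₀p⟩ := le_min_iff.mp hR₀
  show 13 * R.1 + 6 * R.2 ≤ 9
  linarith

theorem half_half_mem_CapRegion : ((1/2 : ℝ), (1/2 : ℝ)) ∈ CapRegion :=
  ⟨0, 1, 1, by norm_num⟩

/-- `(1/2, 1/2)` is in the capacity region (achieved at `r = 0, s = 1, t = 1`)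
but strictly outside the BZT region. -/
theorem cap_point_outside_bzt :
    ((1/2 : ℝ), (1/2 : ℝ)) ∈ CapRegion ∧ ((1/2 : ℝ), (1/2 : ℝ)) ∉ BZTregion := by
  refine ⟨half_half_mem_CapRegion, fun h => ?_⟩
  have hHalfPlane := BZTregion_subset_halfPlane h
  norm_num at hHalfPlane
end

section
/- The boundary of the region ∪_{p,q∈[0,1]}{(R₀,R₁) ∈ ℝ≥0² : R₀ ≤ min(p/6 + q/2, p), R₁ ≤ (1−p)/2 + 1−q} consists of the two line segments joining (0, 3/2) to (0.6, 0.2) and joining (0.6, 0.2) to (2/3, 0); equivalently this union equals {(R₀,R₁) ∈ ℝ≥0² : R₁ ≤ 3/2 − (13/6)R₀ or below the corresponding segments}, namely the convex region with vertices (0,0), (2/3,0), (0.6,0.2), (0,3/2). -/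
theorem smul_add_mem_convexHull_four {E : Type*} [AddCommGroup E] [Module ℝ E]
    {P Q R S : E} {a b c d : ℝ} (ha : 0 ≤ a) (hb : 0 ≤ b) (hc : 0 ≤ c) (hd : 0 ≤ d)
    (habcd : a + b + c + d = 1) :
    a • P + b • Q + c • R + d • S ∈ convexHull ℝ {P, Q, R, S} := by
  have key := (convex_convexHull ℝ ({P, Q, R, S} : Set E)).sum_mem (t := Finset.univ)
    (w := ![a, b, c, d]) (z := ![P, Q, R, S]) (fun i _ => by fin_cases i <;> assumption)
    (by simpa [Fin.sum_univ_four] using habcd)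
    (fun i _ => subset_convexHull ℝ _ (by fin_cases i <;> simp))
  simpa [Fin.sum_univ_four] using key

def bztPolygon : Set (ℝ × ℝ) :=
  {R | 0 ≤ R.1 ∧ 0 ≤ R.2 ∧ 3 * R.1 + R.2 ≤ 2 ∧ 13 * R.1 + 6 * R.2 ≤ 9}

theorem isLinearMap_linearCombination (α β : ℝ) :
    IsLinearMap ℝ (fun R : ℝ × ℝ => α * R.1 + β * R.2) :=
  ⟨fun R S => by simp only [Prod.fst_add, Prod.snd_add]; ring,
   fun t R => by simp only [Prod.smul_fst, Prod.smul_snd, smul_eq_mul]; ring⟩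

theorem convex_bztPolygon : Convex ℝ bztPolygon := by
  have h := (convex_halfSpace_ge (isLinearMap_linearCombination 1 0) 0).inter
    ((convex_halfSpace_ge (isLinearMap_linearCombination 0 1) 0).inter
      ((convex_halfSpace_le (isLinearMap_linearCombination 3 1) 2).inter
        (convex_halfSpace_le (isLinearMap_linearCombination 13 6) 9)))
  simp only [one_mul, zero_mul, add_zero, zero_add] at h
  exact h

theorem convexHull_bztVertices :
    convexHull ℝ ({((0:ℝ),(0:ℝ)), ((2/3:ℝ),(0:ℝ)), ((3/5:ℝ),(1/5:ℝ)),
      ((0:ℝ),(3/2:ℝ))} : Set (ℝ × ℝ)) = bztPolygon := by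
  refine subset_antisymm (convexHull_min ?_ convex_bztPolygon) ?_
  · rintro z (rfl | rfl | rfl | rfl) <;> norm_num [bztPolygon]
  · rintro ⟨x, y⟩ ⟨hx, hy, hAB, hBC⟩
    rcases le_total (x / 3) y with hOB | hOB
    · convert smul_add_mem_convexHull_four (a := (9 - 13 * x - 6 * y) / 9) (b := 0)
        (c := 5 * x / 3) (d := 2 * y / 3 - 2 * x / 9) (by linarith) le_rfl (by linarith)
        (by linarith) (by ring) using 1
      simp only [Prod.smul_mk, smul_eq_mul, Prod.mk_add_mk, Prod.mk.injEq]
      constructor <;> ring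
    · convert smul_add_mem_convexHull_four (a := (2 - 3 * x - y) / 2) (b := 3 * x / 2 - 9 * y / 2)
        (c := 5 * y) (d := 0) (by linarith) (by linarith) (by linarith)
        le_rfl (by ring) using 1
      simp only [Prod.smul_mk, smul_eq_mul, Prod.mk_add_mk, Prod.mk.injEq]
      constructor <;> ring

theorem bztRegion_subset_bztPolygon : BZTregion ⊆ bztPolygon := by
  rintro ⟨x, y⟩ ⟨p, q, ⟨hp0, hp1⟩, ⟨hq0, hq1⟩, hx, hy, hxpq, hypq⟩
  rw [le_min_iff] at hxpq
  exact ⟨hx, hy, by linarith, by linarith⟩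

theorem bztPolygon_subset_bztRegion : bztPolygon ⊆ BZTregion := by
  rintro ⟨x, y⟩ ⟨hx, hy, hAB, hBC⟩
  rcases le_total x (3 / 5) with hB | hB
  · exact ⟨x, 5 * x / 3, ⟨hx, by linarith⟩, ⟨by linarith, by linarith⟩, hx, hy,
      le_min (by linarith) le_rfl, by linarith⟩
  · exact ⟨6 * x - 3, 1, ⟨by linarith, by linarith⟩, ⟨zero_le_one, le_rfl⟩, hx, hy,
      le_min (by linarith) (by linarith), by linarith⟩

/-- The BZT region is the convex polygon with vertices
`(0,0)`, `(2/3,0)`, `(3/5,1/5)`, `(0,3/2)` (intersected with the nonnegative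
quadrant); its boundary consists of the segments joining `(0, 3/2)` to
`(0.6, 0.2)` and `(0.6, 0.2)` to `(2/3, 0)`. -/
theorem bzt_region_eq_polygon :
    BZTregion =
      convexHull ℝ ({((0:ℝ),(0:ℝ)), ((2/3:ℝ),(0:ℝ)), ((3/5:ℝ),(1/5:ℝ)),
          ((0:ℝ),(3/2:ℝ))} : Set (ℝ × ℝ))
        ∩ {R : ℝ × ℝ | 0 ≤ R.1 ∧ 0 ≤ R.2} := by
  have hquadrant : bztPolygon ⊆ {R : ℝ × ℝ | 0 ≤ R.1 ∧ 0 ≤ R.2} := fun R hR => ⟨hR.1, hR.2.1⟩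
  rw [convexHull_bztVertices, Set.inter_eq_left.mpr hquadrant]
  exact bztRegion_subset_bztPolygon.antisymm bztPolygon_subset_bztRegion
end

section
/- Let U₁ → U₂ → X → (Y₁, Y₂) be finitely-valued random variables with U₁ → U₂ → X a Markov chain. Then I(U₂; Y₂ | U₁) + I(U₃; Y₃) − I(U₂; U₃ | U₁) ≤ I(U₃; Y₃) + I(X; Y₂ | U₃) whenever also U₁ → U₃ → (U₂, X) is a Markov chain, where all variables are jointly distributed with the channel outputs; equivalently I(U₂; Y₂ | U₁) − I(U₂; U₃ | U₁) ≤ I(X; Y₂ | U₃). -/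
open Real BigOperators Finset

noncomputable section

/-- Probability that a random variable `X` takes value `a`, under weight function `μ`. -/
def prob {Ω : Type*} [Fintype Ω] {A : Type*} [DecidableEq A]
    (μ : Ω → ℝ) (X : Ω → A) (a : A) : ℝ :=
  ∑ ω, if X ω = a then μ ω else 0

/-- Shannon entropy (natural log) of a finitely-valued random variable. -/
def Hent {Ω : Type*} [Fintype Ω] {A : Type*} [Fintype A] [DecidableEq A]
    (μ : Ω → ℝ) (X : Ω → A) : ℝ :=
  ∑ a, Real.negMulLog (prob μ X a)

/-- Mutual information `I(X;Y)`. -/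
def MI {Ω : Type*} [Fintype Ω] {A B : Type*} [Fintype A] [DecidableEq A]
    [Fintype B] [DecidableEq B] (μ : Ω → ℝ) (X : Ω → A) (Y : Ω → B) : ℝ :=
  Hent μ X + Hent μ Y - Hent μ (fun ω => (X ω, Y ω))

/-- Conditional mutual information `I(X;Y|Z)`. -/
def CMI {Ω : Type*} [Fintype Ω] {A B C : Type*} [Fintype A] [DecidableEq A]
    [Fintype B] [DecidableEq B] [Fintype C] [DecidableEq C]
    (μ : Ω → ℝ) (X : Ω → A) (Y : Ω → B) (Z : Ω → C) : ℝ :=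
  Hent μ (fun ω => (X ω, Z ω)) + Hent μ (fun ω => (Y ω, Z ω))
    - Hent μ (fun ω => (X ω, Y ω, Z ω)) - Hent μ Z

/-- `μ` is a probability mass function on the finite sample space `Ω`. -/
def IsProbMeasure {Ω : Type*} [Fintype Ω] (μ : Ω → ℝ) : Prop :=
  (∀ ω, 0 ≤ μ ω) ∧ ∑ ω, μ ω = 1

/-- `X → Y → Z` forms a Markov chain: `X` and `Z` are conditionally independent given `Y`. -/
def Markov {Ω : Type*} [Fintype Ω] {A B C : Type*} [DecidableEq A]
    [DecidableEq B] [DecidableEq C]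
    (μ : Ω → ℝ) (X : Ω → A) (Y : Ω → B) (Z : Ω → C) : Prop :=
  ∀ a b c, prob μ (fun ω => (X ω, Y ω, Z ω)) (a, b, c) * prob μ Y b
    = prob μ (fun ω => (X ω, Y ω)) (a, b) * prob μ (fun ω => (Y ω, Z ω)) (b, c)

end

/-!
By the chain rule,
`I(U₂;Y₂|U₁) ≤ I(U₂;U₃|U₁) + I(U₂;Y₂|U₃,U₁) ≤ I(U₂;U₃|U₁) + I(U₂U₁;Y₂|U₃)
  ≤ I(U₂;U₃|U₁) + I(X;Y₂|U₃) + I(U₂U₁;Y₂|X,U₃)`,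
and the last term vanishes because the outputs see `(U₁,U₂,U₃)` only through `X`.
Nonnegativity of conditional mutual information, used at every step, is Gibbs' inequality
comparing `p(x,y,z)` with `p(x|z) p(y|z) p(z)`.
-/

open Function

theorem sub_le_mul_log_sub_log {a b : ℝ} (ha : 0 < a) (hb : 0 < b) :
    a - b ≤ a * (log a - log b) := by
  have h := mul_le_mul_of_nonneg_left (log_le_sub_one_of_pos (div_pos hb ha)) ha.le
  rw [log_div hb.ne' ha.ne', show a * (b / a - 1) = b - a by field_simp] at h
  linarith

theorem sum_mul_log_sub_log_nonneg {ι : Type*} [Fintype ι] {p q : ι → ℝ}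
    (hp : ∀ i, 0 ≤ p i) (hq : ∀ i, 0 ≤ q i) (hpq : ∀ i, p i ≠ 0 → q i ≠ 0)
    (hsum : ∑ i, q i ≤ ∑ i, p i) :
    0 ≤ ∑ i, p i * (log (p i) - log (q i)) :=
  calc 0 ≤ ∑ i, (p i - q i) := by rw [sum_sub_distrib]; linarith
    _ ≤ _ := sum_le_sum fun i _ => by
      rcases (hp i).eq_or_lt with h | h
      · simp [← h, hq i]
      · exact sub_le_mul_log_sub_log h ((hq i).lt_of_ne (hpq i h.ne').symm)

section Prob

variable {Ω : Type*} [Fintype Ω] {A B C : Type*} [DecidableEq A] [DecidableEq B]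
  [DecidableEq C] (μ : Ω → ℝ)

theorem sum_prob_mul [Fintype A] (T : Ω → A) (g : A → ℝ) :
    ∑ a, prob μ T a * g a = ∑ ω, μ ω * g (T ω) := by
  simp only [prob, sum_mul, ite_mul, zero_mul]
  rw [sum_comm]
  simp

theorem sum_prob [Fintype A] (T : Ω → A) : ∑ a, prob μ T a = ∑ ω, μ ω := by
  simpa using sum_prob_mul μ T 1

theorem prob_nonneg (hμ : ∀ ω, 0 ≤ μ ω) (T : Ω → A) (a : A) : 0 ≤ prob μ T a :=
  sum_nonneg fun ω _ => by split_ifs <;> simp [hμ ω]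

theorem le_prob_apply (hμ : ∀ ω, 0 ≤ μ ω) (T : Ω → A) (ω : Ω) : μ ω ≤ prob μ T (T ω) := by
  simpa [prob] using single_le_sum (f := fun ω' => if T ω' = T ω then μ ω' else 0)
    (fun ω' _ => by split_ifs <;> simp [hμ ω']) (mem_univ ω)

theorem prob_le_prob_comp (hμ : ∀ ω, 0 ≤ μ ω) (T : Ω → A) (f : A → B) (a : A) :
    prob μ T a ≤ prob μ (fun ω => f (T ω)) (f a) :=
  sum_le_sum fun ω _ => by
    by_cases h : T ω = a
    · simp [h]
    · simp only [h, if_false]; split_ifs <;> simp [hμ ω]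

theorem prob_comp_of_injective {e : A → B} (he : Injective e) (T : Ω → A) (a : A) :
    prob μ (fun ω => e (T ω)) (e a) = prob μ T a := by
  simp [prob, he.eq_iff]

theorem sum_prob_pair [Fintype A] (X : Ω → A) (Z : Ω → C) (c : C) :
    ∑ a, prob μ (fun ω => (X ω, Z ω)) (a, c) = prob μ Z c := by
  simp only [prob, Prod.mk.injEq]
  rw [sum_comm]
  refine sum_congr rfl fun ω _ => ?_
  by_cases hc : Z ω = c <;> simp [hc]

/-- The law `p(x|z) p(y|z) p(z)`, under which `X` and `Y` are conditionally independent given `Z`;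
it vanishes where `p(z) = 0` because `x / 0 = 0`. -/
noncomputable def condIndepProb (X : Ω → A) (Y : Ω → B) (Z : Ω → C) (t : A × B × C) : ℝ :=
  prob μ (fun ω => (X ω, Z ω)) (t.1, t.2.2) * prob μ (fun ω => (Y ω, Z ω)) (t.2.1, t.2.2)
    / prob μ Z t.2.2

theorem sum_condIndepProb [Fintype A] [Fintype B] [Fintype C]
    (X : Ω → A) (Y : Ω → B) (Z : Ω → C) :
    ∑ t, condIndepProb μ X Y Z t = ∑ ω, μ ω := by
  rw [Fintype.sum_prod_type_right, Fintype.sum_prod_type_right, ← sum_prob μ Z]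
  refine sum_congr rfl fun c _ => ?_
  simp only [condIndepProb, ← sum_div, ← sum_mul, ← mul_sum]
  rw [sum_prob_pair, sum_prob_pair, mul_self_div_self]

theorem marginals_pos_of_prob_pos (hμ : ∀ ω, 0 ≤ μ ω) (X : Ω → A) (Y : Ω → B) (Z : Ω → C)
    {x : A} {y : B} {z : C} (h : 0 < prob μ (fun ω => (X ω, Y ω, Z ω)) (x, y, z)) :
    0 < prob μ (fun ω => (X ω, Z ω)) (x, z) ∧ 0 < prob μ (fun ω => (Y ω, Z ω)) (y, z) ∧
      0 < prob μ Z z :=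
  ⟨h.trans_le (prob_le_prob_comp μ hμ _ (fun t : A × B × C => (t.1, t.2.2)) _),
    h.trans_le (prob_le_prob_comp μ hμ _ (fun t : A × B × C => t.2) _),
    h.trans_le (prob_le_prob_comp μ hμ _ (fun t : A × B × C => t.2.2) _)⟩

theorem log_condIndepProb (hμ : ∀ ω, 0 ≤ μ ω) (X : Ω → A) (Y : Ω → B) (Z : Ω → C)
    {x : A} {y : B} {z : C} (h : 0 < prob μ (fun ω => (X ω, Y ω, Z ω)) (x, y, z)) :
    log (condIndepProb μ X Y Z (x, y, z)) = log (prob μ (fun ω => (X ω, Z ω)) (x, z))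
      + log (prob μ (fun ω => (Y ω, Z ω)) (y, z)) - log (prob μ Z z) := by
  obtain ⟨hxz, hyz, hz⟩ := marginals_pos_of_prob_pos μ hμ X Y Z h
  rw [condIndepProb, log_div (mul_pos hxz hyz).ne' hz.ne', log_mul hxz.ne' hyz.ne']

theorem prob_eq_condIndepProb_of_markov (hμ : ∀ ω, 0 ≤ μ ω) {X : Ω → A} {Y : Ω → B}
    {Z : Ω → C} (h : Markov μ X Z Y) (t : A × B × C) :
    prob μ (fun ω => (X ω, Y ω, Z ω)) t = condIndepProb μ X Y Z t := by
  obtain ⟨x, y, z⟩ := t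
  have hperm : prob μ (fun ω => (X ω, Z ω, Y ω)) (x, z, y)
      = prob μ (fun ω => (X ω, Y ω, Z ω)) (x, y, z) :=
    prob_comp_of_injective μ (e := fun t : A × B × C => (t.1, t.2.2, t.2.1))
      (LeftInverse.injective (g := fun t : A × C × B => (t.1, t.2.2, t.2.1)) fun _ => rfl)
      (fun ω => (X ω, Y ω, Z ω)) (x, y, z)
  have hswap : prob μ (fun ω => (Z ω, Y ω)) (z, y) = prob μ (fun ω => (Y ω, Z ω)) (y, z) :=
    prob_comp_of_injective μ Prod.swap_injective (fun ω => (Y ω, Z ω)) (y, z)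
  have hm := h x z y
  rw [hperm, hswap] at hm
  rcases eq_or_ne (prob μ Z z) 0 with hz | hz
  · have hle := prob_le_prob_comp μ hμ (fun ω => (X ω, Y ω, Z ω)) (fun t => t.2.2) (x, y, z)
    simpa [condIndepProb, hz] using le_antisymm (hle.trans hz.le) (prob_nonneg μ hμ _ _)
  · exact eq_div_of_mul_eq hz hm

end Prob

section Entropy

variable {Ω : Type*} [Fintype Ω] {A B C D E F : Type*} [Fintype A] [DecidableEq A]
  [Fintype B] [DecidableEq B] [Fintype C] [DecidableEq C] [Fintype D] [DecidableEq D]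
  [Fintype E] [DecidableEq E] [Fintype F] [DecidableEq F] (μ : Ω → ℝ)

theorem Hent_eq_neg_sum (T : Ω → A) : Hent μ T = -∑ ω, μ ω * log (prob μ T (T ω)) := by
  simp only [Hent, negMulLog, neg_mul, sum_neg_distrib, sum_prob_mul]

theorem Hent_comp_of_injective {e : A → B} (he : Injective e) (T : Ω → A) :
    Hent μ (fun ω => e (T ω)) = Hent μ T := by
  simp only [Hent_eq_neg_sum, prob_comp_of_injective μ he]

theorem CMI_comp_of_injective {e₁ : A → D} {e₂ : B → E} {e₃ : C → F}
    (he₁ : Injective e₁) (he₂ : Injective e₂) (he₃ : Injective e₃)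
    (X : Ω → A) (Y : Ω → B) (Z : Ω → C) :
    CMI μ (fun ω => e₁ (X ω)) (fun ω => e₂ (Y ω)) (fun ω => e₃ (Z ω)) = CMI μ X Y Z := by
  rw [CMI, CMI, ← Hent_comp_of_injective μ (he₁.prodMap he₃) (fun ω => (X ω, Z ω)),
    ← Hent_comp_of_injective μ (he₂.prodMap he₃) (fun ω => (Y ω, Z ω)),
    ← Hent_comp_of_injective μ (he₁.prodMap (he₂.prodMap he₃)) (fun ω => (X ω, Y ω, Z ω)),
    ← Hent_comp_of_injective μ he₃ Z]
  rfl

theorem CMI_comm (X : Ω → A) (Y : Ω → B) (Z : Ω → C) : CMI μ X Y Z = CMI μ Y X Z := by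
  have h : Hent μ (fun ω => (X ω, Y ω, Z ω)) = Hent μ (fun ω => (Y ω, X ω, Z ω)) :=
    Hent_comp_of_injective μ (e := fun t : B × A × C => (t.2.1, t.1, t.2.2))
      (LeftInverse.injective (g := fun t : A × B × C => (t.2.1, t.1, t.2.2)) fun _ => rfl)
      (fun ω => (Y ω, X ω, Z ω))
  rw [CMI, CMI, h]
  ring

theorem CMI_prod_right (X : Ω → A) (Y : Ω → B) (W : Ω → D) (Z : Ω → C) :
    CMI μ X (fun ω => (Y ω, W ω)) Z = CMI μ X W Z + CMI μ X Y (fun ω => (W ω, Z ω)) := by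
  have h₁ : Hent μ (fun ω => ((Y ω, W ω), Z ω)) = Hent μ (fun ω => (Y ω, W ω, Z ω)) :=
    (Hent_comp_of_injective μ (Equiv.prodAssoc B D C).injective _).symm
  have h₂ : Hent μ (fun ω => (X ω, (Y ω, W ω), Z ω)) = Hent μ (fun ω => (X ω, Y ω, W ω, Z ω)) :=
    (Hent_comp_of_injective μ (injective_id.prodMap (Equiv.prodAssoc B D C).injective) _).symm
  rw [CMI, CMI, CMI, h₁, h₂]
  ring

theorem CMI_eq_sum (hμ : ∀ ω, 0 ≤ μ ω) (X : Ω → A) (Y : Ω → B) (Z : Ω → C) :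
    CMI μ X Y Z = ∑ t, prob μ (fun ω => (X ω, Y ω, Z ω)) t *
      (log (prob μ (fun ω => (X ω, Y ω, Z ω)) t) - log (condIndepProb μ X Y Z t)) := by
  rw [sum_prob_mul, CMI, ← sub_eq_zero]
  simp only [Hent_eq_neg_sum, ← sum_neg_distrib, ← sum_add_distrib, ← sum_sub_distrib]
  refine sum_eq_zero fun ω _ => ?_
  rcases (hμ ω).eq_or_lt with h | h
  · simp [← h]
  · rw [log_condIndepProb μ hμ X Y Z (h.trans_le (le_prob_apply μ hμ _ ω))]
    ring

theorem CMI_nonneg (hμ : ∀ ω, 0 ≤ μ ω) (X : Ω → A) (Y : Ω → B) (Z : Ω → C) :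
    0 ≤ CMI μ X Y Z := by
  rw [CMI_eq_sum μ hμ]
  refine sum_mul_log_sub_log_nonneg (prob_nonneg μ hμ _) (fun t => ?_) (fun t ht => ?_)
    (by rw [sum_condIndepProb, sum_prob])
  · exact div_nonneg (mul_nonneg (prob_nonneg μ hμ _ _) (prob_nonneg μ hμ _ _))
      (prob_nonneg μ hμ _ _)
  · obtain ⟨hxz, hyz, hz⟩ :=
      marginals_pos_of_prob_pos μ hμ X Y Z ((prob_nonneg μ hμ _ t).lt_of_ne' ht)
    exact (div_pos (mul_pos hxz hyz) hz).ne'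

theorem CMI_eq_zero_of_markov (hμ : ∀ ω, 0 ≤ μ ω) {X : Ω → A} {Y : Ω → B} {Z : Ω → C}
    (h : Markov μ X Z Y) : CMI μ X Y Z = 0 := by
  simp [CMI_eq_sum μ hμ, prob_eq_condIndepProb_of_markov μ hμ h]

theorem CMI_le_CMI_add_CMI_cond (hμ : ∀ ω, 0 ≤ μ ω) (X : Ω → A) (Y : Ω → B) (W : Ω → D)
    (Z : Ω → C) : CMI μ X Y Z ≤ CMI μ X W Z + CMI μ X Y (fun ω => (W ω, Z ω)) := by
  have hswap : CMI μ X (fun ω => (W ω, Y ω)) Z = CMI μ X (fun ω => (Y ω, W ω)) Z :=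
    CMI_comp_of_injective μ injective_id Prod.swap_injective injective_id X
      (fun ω => (Y ω, W ω)) Z
  have hYW := CMI_prod_right μ X Y W Z
  have hWY := CMI_prod_right μ X W Y Z
  linarith [CMI_nonneg μ hμ X W (fun ω => (Y ω, Z ω))]

theorem CMI_le_CMI_add_CMI_cond' (hμ : ∀ ω, 0 ≤ μ ω) (X : Ω → A) (Y : Ω → B) (W : Ω → D)
    (Z : Ω → C) : CMI μ X Y Z ≤ CMI μ W Y Z + CMI μ X Y (fun ω => (W ω, Z ω)) := by
  have h := CMI_le_CMI_add_CMI_cond μ hμ Y X W Z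
  rwa [CMI_comm μ Y X, CMI_comm μ Y W, CMI_comm μ Y X] at h

theorem CMI_cond_le_CMI_prod (hμ : ∀ ω, 0 ≤ μ ω) (X : Ω → A) (Y : Ω → B) (Z : Ω → C)
    (W : Ω → D) : CMI μ X Y (fun ω => (Z ω, W ω)) ≤ CMI μ (fun ω => (X ω, W ω)) Y Z := by
  have hswap : CMI μ X Y (fun ω => (Z ω, W ω)) = CMI μ X Y (fun ω => (W ω, Z ω)) :=
    CMI_comp_of_injective μ injective_id injective_id Prod.swap_injective X Y
      (fun ω => (W ω, Z ω))
  rw [hswap, CMI_comm μ X, CMI_comm μ _ Y, CMI_prod_right]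
  linarith [CMI_nonneg μ hμ Y W Z]

theorem CMI_comp_right_le (hμ : ∀ ω, 0 ≤ μ ω) (X : Ω → A) (Y : Ω → B) (Z : Ω → C)
    (g : B → D) : CMI μ X (fun ω => g (Y ω)) Z ≤ CMI μ X Y Z := by
  have hgraph : CMI μ X (fun ω => (Y ω, g (Y ω))) Z = CMI μ X Y Z :=
    CMI_comp_of_injective μ injective_id (e₂ := fun b => (b, g b))
      (LeftInverse.injective (g := Prod.fst) fun _ => rfl) injective_id X Y Z
  rw [← hgraph, CMI_prod_right]
  linarith [CMI_nonneg μ hμ X Y (fun ω => (g (Y ω), Z ω))]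

theorem CMI_comp_le (hμ : ∀ ω, 0 ≤ μ ω) (X : Ω → A) (Y : Ω → B) (Z : Ω → C)
    (f : A → D) (g : B → E) :
    CMI μ (fun ω => f (X ω)) (fun ω => g (Y ω)) Z ≤ CMI μ X Y Z :=
  calc _ ≤ CMI μ (fun ω => f (X ω)) Y Z := CMI_comp_right_le μ hμ _ Y Z g
    _ = CMI μ Y (fun ω => f (X ω)) Z := CMI_comm μ _ Y Z
    _ ≤ CMI μ Y X Z := CMI_comp_right_le μ hμ Y X Z f
    _ = CMI μ X Y Z := CMI_comm μ Y X Z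

theorem CMI_comp_eq_zero_of_markov (hμ : ∀ ω, 0 ≤ μ ω) {U : Ω → A} {V : Ω → B} {Y : Ω → C}
    (h : Markov μ U V Y) (f : A → D) (g : C → E) (k : A → F) :
    CMI μ (fun ω => f (U ω)) (fun ω => g (Y ω)) (fun ω => (V ω, k (U ω))) = 0 :=
  le_antisymm
    (calc _ ≤ CMI μ (fun ω => (f (U ω), k (U ω))) (fun ω => g (Y ω)) V :=
          CMI_cond_le_CMI_prod μ hμ _ _ V _
      _ ≤ CMI μ U Y V := CMI_comp_le μ hμ U Y V (fun u => (f u, k u)) g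
      _ = 0 := CMI_eq_zero_of_markov μ hμ h)
    (CMI_nonneg μ hμ _ _ _)

end Entropy

theorem marton_sum_rate_bound_general {Ω : Type*} [Fintype Ω]
    {𝒰₁ 𝒰₂ 𝒰₃ 𝒳 𝒴₁ 𝒴₂ 𝒴₃ : Type*}
    [Fintype 𝒰₁] [DecidableEq 𝒰₁] [Fintype 𝒰₂] [DecidableEq 𝒰₂]
    [Fintype 𝒰₃] [DecidableEq 𝒰₃] [Fintype 𝒳] [DecidableEq 𝒳]
    [Fintype 𝒴₁] [DecidableEq 𝒴₁] [Fintype 𝒴₂] [DecidableEq 𝒴₂]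
    [Fintype 𝒴₃] [DecidableEq 𝒴₃]
    (μ : Ω → ℝ) (hμ : IsProbMeasure μ)
    (U₁ : Ω → 𝒰₁) (U₂ : Ω → 𝒰₂) (U₃ : Ω → 𝒰₃) (X : Ω → 𝒳)
    (Y₁ : Ω → 𝒴₁) (Y₂ : Ω → 𝒴₂) (Y₃ : Ω → 𝒴₃)
    (hCh : Markov μ (fun ω => (U₁ ω, U₂ ω, U₃ ω)) X
      (fun ω => (Y₁ ω, Y₂ ω, Y₃ ω))) :
    CMI μ U₂ Y₂ U₁ + MI μ U₃ Y₃ - CMI μ U₂ U₃ U₁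
      ≤ MI μ U₃ Y₃ + CMI μ X Y₂ U₃ := by
  have hD : CMI μ (fun ω => (U₂ ω, U₁ ω)) Y₂ (fun ω => (X ω, U₃ ω)) = 0 :=
    CMI_comp_eq_zero_of_markov μ hμ.1 hCh (fun u => (u.2.1, u.1)) (fun y => y.2.1)
      (fun u => u.2.2)
  calc CMI μ U₂ Y₂ U₁ + MI μ U₃ Y₃ - CMI μ U₂ U₃ U₁
      ≤ CMI μ U₂ Y₂ (fun ω => (U₃ ω, U₁ ω)) + MI μ U₃ Y₃ := by
        linarith [CMI_le_CMI_add_CMI_cond μ hμ.1 U₂ Y₂ U₃ U₁]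
    _ ≤ CMI μ (fun ω => (U₂ ω, U₁ ω)) Y₂ U₃ + MI μ U₃ Y₃ := by
        linarith [CMI_cond_le_CMI_prod μ hμ.1 U₂ Y₂ U₃ U₁]
    _ ≤ CMI μ X Y₂ U₃ + CMI μ (fun ω => (U₂ ω, U₁ ω)) Y₂ (fun ω => (X ω, U₃ ω))
          + MI μ U₃ Y₃ := by
        linarith [CMI_le_CMI_add_CMI_cond' μ hμ.1 (fun ω => (U₂ ω, U₁ ω)) Y₂ X U₃]
    _ = MI μ U₃ Y₃ + CMI μ X Y₂ U₃ := by rw [hD]; ring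

/-- Under the Markov structure `U₁ → U₂ → (U₃,X)`, `U₁ → U₃ → (U₂,X)`,
`(U₁,U₂,U₃) → X → (Y₁,Y₂,Y₃)`:
`I(U₂;Y₂|U₁) + I(U₃;Y₃) − I(U₂;U₃|U₁) ≤ I(U₃;Y₃) + I(X;Y₂|U₃)`. -/
theorem marton_sum_rate_bound {Ω : Type*} [Fintype Ω]
    {𝒰₁ 𝒰₂ 𝒰₃ 𝒳 𝒴₁ 𝒴₂ 𝒴₃ : Type*}
    [Fintype 𝒰₁] [DecidableEq 𝒰₁] [Fintype 𝒰₂] [DecidableEq 𝒰₂]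
    [Fintype 𝒰₃] [DecidableEq 𝒰₃] [Fintype 𝒳] [DecidableEq 𝒳]
    [Fintype 𝒴₁] [DecidableEq 𝒴₁] [Fintype 𝒴₂] [DecidableEq 𝒴₂]
    [Fintype 𝒴₃] [DecidableEq 𝒴₃]
    (μ : Ω → ℝ) (hμ : IsProbMeasure μ)
    (U₁ : Ω → 𝒰₁) (U₂ : Ω → 𝒰₂) (U₃ : Ω → 𝒰₃) (X : Ω → 𝒳)
    (Y₁ : Ω → 𝒴₁) (Y₂ : Ω → 𝒴₂) (Y₃ : Ω → 𝒴₃)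
    (h₂ : Markov μ U₁ U₂ (fun ω => (U₃ ω, X ω)))
    (h₃ : Markov μ U₁ U₃ (fun ω => (U₂ ω, X ω)))
    (hCh : Markov μ (fun ω => (U₁ ω, U₂ ω, U₃ ω)) X
      (fun ω => (Y₁ ω, Y₂ ω, Y₃ ω))) :
    CMI μ U₂ Y₂ U₁ + MI μ U₃ Y₃ - CMI μ U₂ U₃ U₁
      ≤ MI μ U₃ Y₃ + CMI μ X Y₂ U₃ :=
  marton_sum_rate_bound_general μ hμ U₁ U₂ U₃ X Y₁ Y₂ Y₃ hCh
end

section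
/- Projection identity for the Marton-type inner bound: nonnegative reals (R₀, R₁) admit nonnegative S₁, S₂, S₃ with R₁ = S₁ + S₂ + S₃ satisfying R₀ + S₂ ≤ b, R₀ + S₃ ≤ c, 2R₀ + S₂ + S₃ ≤ b + c − a, R₀ + S₁ + S₂ + S₃ ≤ d, S₁ + S₂ + S₃ ≤ e, S₁ + S₂ ≤ f, S₁ + S₃ ≤ g, S₁ ≤ h, if and only if: R₀ ≤ min(b, c), 2R₀ ≤ b + c − a, R₁ ≤ min(f + g, e), R₀ + R₁ ≤ min(d, b + g, c + f), 2R₀ + R₁ ≤ b + c + h − a, and 2R₀ + 2R₁ ≤ b + g + c + f − a. -/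
/-! Fourier–Motzkin elimination in two rounds. Take `S₁ = max 0 (R₁ - (b + c - a - 2R₀))`, the least
value compatible with `2R₀ + S₂ + S₃ ≤ b + c - a`; that it lies below `h`, `R₁` and `f + g - R₁` is
exactly what the stated conditions give (using `h ≤ f`, `h ≤ g`). It remains to split `R₁ - S₁`
into `S₂ ≤ min (f - S₁) (b - R₀)` and `S₃ ≤ min (g - S₁) (c - R₀)`, which is possible once the two
caps sum to at least `R₁ - S₁`; of the four resulting inequalities, the one with `b + c` follows
from the `b + c - a` constraint because `a ≥ 0`. -/

theorem exists_nonneg_add_eq_of_le_add {α : Type*} [AddCommGroup α] [LinearOrder α]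
    [IsOrderedAddMonoid α] {t u v : α} (ht : 0 ≤ t) (hu : 0 ≤ u) (hv : 0 ≤ v) (h : t ≤ u + v) :
    ∃ x y, 0 ≤ x ∧ 0 ≤ y ∧ x + y = t ∧ x ≤ u ∧ y ≤ v := by
  refine ⟨min t u, t - min t u, le_min ht hu, sub_nonneg.2 (min_le_left _ _),
    add_sub_cancel _ _, min_le_right _ _, ?_⟩
  rcases min_cases t u with ⟨hm, -⟩ | ⟨hm, -⟩ <;> rw [hm]
  · simpa using hv
  · exact sub_le_iff_le_add'.2 h

theorem le_min_add_min {α : Type*} [Add α] [LinearOrder α] {t p q r s : α}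
    (hpr : t ≤ p + r) (hps : t ≤ p + s) (hqr : t ≤ q + r) (hqs : t ≤ q + s) : t ≤ min p q + min r s := by
  rcases min_choice p q with h | h <;> rcases min_choice r s with h' | h' <;> rw [h, h'] <;>
    assumption

theorem fourier_motzkin_inner_bound_general (a b c d e f g h R₀ R₁ : ℝ)
    (ha : 0 ≤ a) (hh : 0 ≤ h) (hhf : h ≤ f) (hhg : h ≤ g) (hR1 : 0 ≤ R₁) :
    (∃ S₁ S₂ S₃ : ℝ, 0 ≤ S₁ ∧ 0 ≤ S₂ ∧ 0 ≤ S₃ ∧ R₁ = S₁ + S₂ + S₃ ∧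
      R₀ + S₂ ≤ b ∧ R₀ + S₃ ≤ c ∧ 2*R₀ + S₂ + S₃ ≤ b + c - a ∧
      R₀ + S₁ + S₂ + S₃ ≤ d ∧ S₁ + S₂ + S₃ ≤ e ∧
      S₁ + S₂ ≤ f ∧ S₁ + S₃ ≤ g ∧ S₁ ≤ h)
    ↔ (R₀ ≤ min b c ∧ 2*R₀ ≤ b + c - a ∧ R₁ ≤ min (f + g) e ∧
       R₀ + R₁ ≤ min d (min (b + g) (c + f)) ∧
       2*R₀ + R₁ ≤ b + c + h - a ∧
       2*R₀ + 2*R₁ ≤ b + g + c + f - a) := by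
  simp only [le_min_iff]
  constructor
  · rintro ⟨S₁, S₂, S₃, hS₁, hS₂, hS₃, rfl, hb, hc, hbc, hd, he, hf, hg, hh⟩
    refine ⟨⟨?_, ?_⟩, ?_, ⟨?_, ?_⟩, ⟨?_, ?_, ?_⟩, ?_, ?_⟩ <;> linarith
  · rintro ⟨⟨hb, hc⟩, hbc, ⟨hfg, he⟩, ⟨hd, hbg, hcf⟩, hbch, hbcfg⟩
    set S₁ := max 0 (R₁ - (b + c - a - 2 * R₀))
    have hS₁ : 0 ≤ S₁ := le_max_left _ _
    have hS₁bc : R₁ - S₁ ≤ b + c - a - 2 * R₀ := sub_le_comm.1 (le_max_right _ _)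
    have hS₁h : S₁ ≤ h := max_le hh (by linarith)
    have hS₁R : S₁ ≤ R₁ := max_le hR1 (by linarith)
    have hS₁fg : S₁ ≤ f + g - R₁ := max_le (by linarith) (by linarith)
    obtain ⟨S₂, S₃, hS₂, hS₃, hsum, hS₂fb, hS₃gc⟩ :=
      exists_nonneg_add_eq_of_le_add (t := R₁ - S₁) (u := min (f - S₁) (b - R₀))
        (v := min (g - S₁) (c - R₀)) (by linarith) (le_min (by linarith) (by linarith))
        (le_min (by linarith) (by linarith))
        (le_min_add_min (by linarith) (by linarith) (by linarith) (by linarith))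
    rw [le_min_iff] at hS₂fb hS₃gc
    exact ⟨S₁, S₂, S₃, hS₁, hS₂, hS₃, by linarith, by linarith, by linarith, by linarith,
      by linarith, by linarith, by linarith, by linarith, hS₁h⟩

/-- Correctness of the Fourier–Motzkin elimination producing the inner bound of
Proposition 4.  The constants `a,…,h` stand for `I(U₂;U₃|U₁)`, `I(U₂;Y₂)`,
`I(U₃;Y₃)`, `I(X;Y₁)`, `I(X;Y₁|U₁)`, `I(X;Y₁|U₃)`, `I(X;Y₁|U₂)`,
`I(X;Y₁|U₂,U₃)` respectively. -/
theorem fourier_motzkin_inner_bound (a b c d e f g h R₀ R₁ : ℝ)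
    (ha : 0 ≤ a) (hb : 0 ≤ b) (hc : 0 ≤ c) (hd : 0 ≤ d) (he : 0 ≤ e)
    (hf : 0 ≤ f) (hg : 0 ≤ g) (hh : 0 ≤ h)
    (hhf : h ≤ f) (hfe : f ≤ e) (hhg : h ≤ g) (hge : g ≤ e) (hed : e ≤ d)
    (hR0 : 0 ≤ R₀) (hR1 : 0 ≤ R₁) :
    (∃ S₁ S₂ S₃ : ℝ, 0 ≤ S₁ ∧ 0 ≤ S₂ ∧ 0 ≤ S₃ ∧ R₁ = S₁ + S₂ + S₃ ∧
      R₀ + S₂ ≤ b ∧ R₀ + S₃ ≤ c ∧ 2*R₀ + S₂ + S₃ ≤ b + c - a ∧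
      R₀ + S₁ + S₂ + S₃ ≤ d ∧ S₁ + S₂ + S₃ ≤ e ∧
      S₁ + S₂ ≤ f ∧ S₁ + S₃ ≤ g ∧ S₁ ≤ h)
    ↔ (R₀ ≤ min b c ∧ 2*R₀ ≤ b + c - a ∧ R₁ ≤ min (f + g) e ∧
       R₀ + R₁ ≤ min d (min (b + g) (c + f)) ∧
       2*R₀ + R₁ ≤ b + c + h - a ∧
       2*R₀ + 2*R₁ ≤ b + g + c + f - a) :=
  fourier_motzkin_inner_bound_general a b c d e f g h R₀ R₁ ha hh hhf hhg hR1
end
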